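/- Let p ∈ {2,3,5,7}, q = p−1, and Â_q the untwisted affine Kac-Moody algebra of type A_q. Let μ be a weight of level 0 whose projection to A_q' satisfies μ̄ = Λ̄_i mod A_q. Then for all dominant integral weights Λ of level p and all weights λ of level p, the string functions satisfy c^Λ_{λ+pμ} = c^Λ_{(pΛ_i).λ}, i.e. translating λ by p times a glue vector of class i has the same effect on string functions as applying the simple current pΛ_i. -/

import Mathlib

/-!
STATEMENT 1.
Let p ∈ {2,3,5,7}, q = p−1, and Â_q the untwisted affine Kac-Moody algebra of type A_q.
Let μ be a weight of level 0 whose projection to A_q' satisfies μ̄ = Λ̄_i mod A_q.  Then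
for all dominant integral weights Λ of level p and all weights λ of level p, the string
functions satisfy c^Λ_{λ+pμ} = c^Λ_{(pΛ_i).λ}, i.e. translating λ by p times a glue
vector of class i has the same effect on string functions as applying the simple
current pΛ_i.

Formalization notes.  Weights mod ℂδ are recorded by their labels (n_0,…,n_q); see the
notes in the statement-0 file.  The class of the projection λ̄ = n_1 Λ̄_1 + ⋯ + n_q Λ̄_q
in the congruence group A_q'/A_q ≅ ℤ/pℤ is n_1 + 2n_2 + ⋯ + q·n_q mod p (the class of
the fundamental weight Λ̄_i being i); this is the function `wcls` below.  The string
functions are axiomatized by `StringFunctions`, with their affine Weyl group invariance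
(Kac (12.7.9)) as the field `weyl_invariant`.
-/

open scoped BigOperators

/-- Labels `(n_0, …, n_q)`, `q = p − 1`, of a weight of the untwisted affine Kac–Moody
algebra `Â_q` of type `A_q`, taken modulo `ℂδ`. -/
abbrev AffWt (p : ℕ) := Fin p → ℤ

/-- The level `n_0 + ⋯ + n_q` of a weight. -/
def wlevel {p : ℕ} (n : AffWt p) : ℤ := ∑ i, n i

/-- A weight is dominant integral iff all its labels are nonnegative. -/
def IsDominant {p : ℕ} (n : AffWt p) : Prop := ∀ i, 0 ≤ n i

/-- The class of the projection `λ̄` of the weight with labels `n` in the congruence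
group `A_q'/A_q ≅ ℤ/pℤ`; the class of `Λ̄_i` is `i`. -/
def wcls {p : ℕ} (n : AffWt p) : ZMod p := ∑ i, (i.1 : ZMod p) * (n i : ZMod p)

/-- The simple current `pΛ_i` of `Â_{p-1}` at level `p` acts on level-`p` weights by
cyclically shifting the labels: `(pΛ_i).(n_0,…,n_q) = (n_{q+1−i},…,n_{q−i})`. -/
def simpleCurrent {p : ℕ} [NeZero p] (i : Fin p) (n : AffWt p) : AffWt p :=
  fun k => n (k - i)

/-- The entries `a_{ij}` of the affine Cartan matrix of `Â_{p-1}` (cyclic `A`-type;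
for `p = 2` this correctly yields `a_{01} = a_{10} = −2`). -/
def affCartan {p : ℕ} [NeZero p] (i j : Fin p) : ℤ :=
  (if i = j then 2 else 0) - (if j = i + 1 then 1 else 0) - (if j = i - 1 then 1 else 0)

/-- The simple affine reflection `s_i` of the affine Weyl group `Ŵ` of `Â_{p-1}`,
acting on weights in label coordinates: `s_i(λ)_j = n_j − a_{ji} n_i`. -/
def affReflect {p : ℕ} [NeZero p] (i : Fin p) (n : AffWt p) : AffWt p :=
  fun j => n j - affCartan j i * n i

/-- The string functions `c_λ^Λ` of the affine Kac–Moody algebra `Â_{p-1}` at level `p`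
(Kac, §12.7), recorded in label coordinates as functions of `τ`; the field
`weyl_invariant` is their invariance under the affine Weyl group, Kac (12.7.9). -/
structure StringFunctions (p : ℕ) [NeZero p] where
  c : AffWt p → AffWt p → ℂ → ℂ
  weyl_invariant : ∀ (Λ lam : AffWt p) (i : Fin p), c Λ (affReflect i lam) = c Λ lam

/-!
Up to a translation, the simple current `pΛ_1` lies in the affine Weyl group:
`s_1 s_2 ⋯ s_{p-1}` acts on labels as `pΛ_1` followed by the translation `t_{Λ_0 - Λ_1}`.
Conjugating `s_1` by the inverse of this element and composing with `s_0` gives the translation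
by the simple root `α_0`, and further conjugation gives every `α_j`, so string functions are
invariant under translation by `p Q`, `Q` the root lattice. A level-zero weight of class `0`
lies in `Q`: modulo `Q` all differences `Λ_{j+1} - Λ_j` agree, so `Λ_j - Λ_0 ≡ j (Λ_1 - Λ_0)`
and `p (Λ_1 - Λ_0) ≡ 0`. This is the case `i = 0`; applying `s_1 ⋯ s_{p-1}` to `λ + pμ` applies
`pΛ_1` to `λ` and lowers the class of `μ` by one, and induction on `i` finishes the proof.
-/

namespace AffWt

open Finset

section Level

variable {p : ℕ}

@[simp] lemma wlevel_add (n m : AffWt p) : wlevel (n + m) = wlevel n + wlevel m :=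
  sum_add_distrib

@[simp] lemma wlevel_sub (n m : AffWt p) : wlevel (n - m) = wlevel n - wlevel m :=
  sum_sub_distrib _ _

@[simp] lemma wlevel_neg (n : AffWt p) : wlevel (-n) = -wlevel n :=
  sum_neg_distrib _

@[simp] lemma wlevel_zsmul (c : ℤ) (n : AffWt p) : wlevel (c • n) = c * wlevel n := by
  simp [wlevel, mul_sum]

@[simp] lemma wlevel_single (j : Fin p) : wlevel (Pi.single j 1 : AffWt p) = 1 := by
  simp [wlevel]

@[simp] lemma wcls_add (n m : AffWt p) : wcls (n + m) = wcls n + wcls m := by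
  simp [wcls, mul_add, sum_add_distrib]

@[simp] lemma wcls_sub (n m : AffWt p) : wcls (n - m) = wcls n - wcls m := by
  simp [wcls, mul_sub, sum_sub_distrib]

@[simp] lemma wcls_single (j : Fin p) : wcls (Pi.single j 1 : AffWt p) = j.1 := by
  simp [wcls, Pi.single_apply]

/-- The translation `t_w` of the affine Weyl group, which moves a weight of level `k` by `k w`
modulo `δ`. -/
def translate (w n : AffWt p) : AffWt p := n + wlevel n • w

lemma wlevel_translate {w : AffWt p} (hw : wlevel w = 0) (n : AffWt p) :
    wlevel (translate w n) = wlevel n := by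
  simp [translate, hw, -zsmul_eq_mul]

lemma translate_add {v w : AffWt p} (hw : wlevel w = 0) (n : AffWt p) :
    translate (v + w) n = translate v (translate w n) := by
  rw [translate, translate, wlevel_translate hw, translate, smul_add]
  abel

lemma translate_neg_cancel {w : AffWt p} (hw : wlevel w = 0) (n : AffWt p) :
    translate w (translate (-w) n) = n := by
  rw [← translate_add (by simpa using hw), add_neg_cancel, translate, smul_zero, add_zero]

end Level

variable {p : ℕ} [NeZero p]

@[simp] lemma simpleCurrent_add (i : Fin p) (n m : AffWt p) :
    simpleCurrent i (n + m) = simpleCurrent i n + simpleCurrent i m := rfl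

@[simp] lemma simpleCurrent_sub (i : Fin p) (n m : AffWt p) :
    simpleCurrent i (n - m) = simpleCurrent i n - simpleCurrent i m := rfl

@[simp] lemma simpleCurrent_zsmul (i : Fin p) (c : ℤ) (n : AffWt p) :
    simpleCurrent i (c • n) = c • simpleCurrent i n := rfl

@[simp] lemma simpleCurrent_single (i j : Fin p) :
    simpleCurrent i (Pi.single j 1) = Pi.single (j + i) 1 := by
  funext k
  simp [simpleCurrent, Pi.single_apply, sub_eq_iff_eq_add]

lemma simpleCurrent_simpleCurrent (i j : Fin p) (n : AffWt p) :
    simpleCurrent i (simpleCurrent j n) = simpleCurrent (i + j) n := by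
  funext k
  simp [simpleCurrent, sub_sub]

@[simp] lemma simpleCurrent_zero (n : AffWt p) : simpleCurrent 0 n = n := by
  funext k
  simp [simpleCurrent]

@[simp] lemma wlevel_simpleCurrent (i : Fin p) (n : AffWt p) :
    wlevel (simpleCurrent i n) = wlevel n :=
  Fintype.sum_equiv (Equiv.subRight i) _ _ fun _ => rfl

lemma wcls_simpleCurrent (i : Fin p) (n : AffWt p) :
    wcls (simpleCurrent i n) = wcls n + i.1 * wlevel n := by
  rw [wcls, ← Fintype.sum_equiv (Equiv.addRight i) (fun k => ((k + i).1 : ZMod p) * n k)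
    _ fun k => by simp [simpleCurrent]]
  simp [wcls, wlevel, Fin.val_add, add_mul, sum_add_distrib, mul_sum]

lemma affCartan_add_add (k j a : Fin p) : affCartan (k + a) (j + a) = affCartan k j := by
  simp only [affCartan, add_left_inj, add_right_comm k a 1, add_sub_right_comm k a 1]

def affRoot (j : Fin p) : AffWt p := fun k => affCartan k j

lemma affRoot_eq (j : Fin p) :
    affRoot j = (2 : ℤ) • Pi.single j 1 - Pi.single (j - 1) 1 - Pi.single (j + 1) 1 := by
  funext k
  have h₁ : j = k + 1 ↔ k = j - 1 := by rw [eq_sub_iff_add_eq, eq_comm]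
  have h₂ : j = k - 1 ↔ k = j + 1 := by rw [eq_sub_iff_add_eq, eq_comm]
  simp only [affRoot, affCartan, h₁, h₂, Pi.sub_apply, Pi.smul_apply, Pi.single_apply]
  split_ifs <;> simp

@[simp] lemma wlevel_affRoot (j : Fin p) : wlevel (affRoot j) = 0 := by
  rw [affRoot_eq, wlevel_sub, wlevel_sub, wlevel_zsmul, wlevel_single, wlevel_single]
  norm_num

@[simp] lemma simpleCurrent_affRoot (i j : Fin p) :
    simpleCurrent i (affRoot j) = affRoot (j + i) := by
  funext k
  rw [simpleCurrent, affRoot, affRoot, ← affCartan_add_add (k - i) j i, sub_add_cancel]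

lemma affReflect_eq_sub (i : Fin p) (n : AffWt p) : affReflect i n = n - n i • affRoot i := by
  funext j
  simp [affReflect, affRoot, mul_comm]

lemma affReflect_apply_self (hp : 1 < p) (i : Fin p) (n : AffWt p) :
    affReflect i n i = -n i := by
  have h : (1 : Fin p) ≠ 0 := by rw [Ne, Fin.one_eq_zero_iff]; omega
  have h' : i ≠ i - 1 := by simpa [eq_sub_iff_add_eq] using h.symm
  simp [affReflect, affCartan, h, h']
  ring

/-- The affine Weyl group element `s_1 s_2 ⋯ s_{p-1}` (`foldr_affReflect_eq_weylShift`). -/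
def weylShift (n : AffWt p) : AffWt p :=
  translate (Pi.single 0 1 - Pi.single 1 1) (simpleCurrent 1 n)

def weylShiftInv (n : AffWt p) : AffWt p :=
  translate (Pi.single 0 1 - Pi.single (-1) 1) (simpleCurrent (-1) n)

@[simp] lemma wlevel_weylShift (n : AffWt p) : wlevel (weylShift n) = wlevel n := by
  simp [weylShift, translate, -zsmul_eq_mul]

lemma weylShift_add {x : AffWt p} (hx : wlevel x = 0) (n : AffWt p) :
    weylShift (n + x) = weylShift n + simpleCurrent 1 x := by
  simp only [weylShift, translate, simpleCurrent_add, wlevel_simpleCurrent, wlevel_add, hx,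
    add_zero]
  abel

lemma weylShiftInv_add {x : AffWt p} (hx : wlevel x = 0) (n : AffWt p) :
    weylShiftInv (n + x) = weylShiftInv n + simpleCurrent (-1) x := by
  simp only [weylShiftInv, translate, simpleCurrent_add, wlevel_simpleCurrent, wlevel_add, hx,
    add_zero]
  abel

lemma weylShift_weylShiftInv (n : AffWt p) : weylShift (weylShiftInv n) = n := by
  rw [weylShiftInv, translate, weylShift_add (by simp [-zsmul_eq_mul]), weylShift, translate]
  simp only [simpleCurrent_simpleCurrent, add_neg_cancel, simpleCurrent_zero, wlevel_simpleCurrent,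
    simpleCurrent_zsmul, simpleCurrent_sub, simpleCurrent_single, zero_add, neg_add_cancel]
  module

lemma weylShiftInv_weylShift (n : AffWt p) : weylShiftInv (weylShift n) = n := by
  rw [weylShift, translate, weylShiftInv_add (by simp [-zsmul_eq_mul]), weylShiftInv, translate]
  simp only [simpleCurrent_simpleCurrent, neg_add_cancel, simpleCurrent_zero, wlevel_simpleCurrent,
    simpleCurrent_zsmul, simpleCurrent_sub, simpleCurrent_single, zero_add, add_neg_cancel]
  module

lemma weylShift_apply_one (hp : 1 < p) (n : AffWt p) : weylShift n 1 = n 0 - wlevel n := by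
  have h : (1 : Fin p) ≠ 0 := by rw [Ne, Fin.one_eq_zero_iff]; omega
  simp [weylShift, translate, simpleCurrent, h, sub_eq_add_neg]

lemma weylShift_translate {w : AffWt p} (hw : wlevel w = 0) (n : AffWt p) :
    weylShift (translate w n) = translate (simpleCurrent 1 w) (weylShift n) := by
  rw [translate, weylShift_add (by simp [hw, -zsmul_eq_mul]), simpleCurrent_zsmul, translate,
    wlevel_weylShift]

lemma translate_affRoot_zero (hp : 1 < p) (n : AffWt p) :
    translate (affRoot 0) n = weylShiftInv (affReflect 1 (weylShift (affReflect 0 n))) := by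
  rw [affReflect_eq_sub 1, weylShift_apply_one hp, sub_eq_add_neg, ← neg_smul,
    weylShiftInv_add (by simp [-zsmul_eq_mul]), weylShiftInv_weylShift, simpleCurrent_zsmul,
    simpleCurrent_affRoot, affReflect_apply_self hp, affReflect_eq_sub, translate]
  simp only [wlevel_sub, wlevel_zsmul, wlevel_affRoot, mul_zero, sub_zero, add_neg_cancel]
  module

lemma foldr_affReflect_eq_weylShift (hp : p = 2 ∨ p = 3 ∨ p = 5 ∨ p = 7) (n : AffWt p) :
    (List.finRange p).tail.foldr affReflect n = weylShift n := by
  rcases hp with rfl | rfl | rfl | rfl <;> funext k <;> fin_cases k <;>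
    simp +decide [List.finRange_succ, weylShift, translate, simpleCurrent, affReflect, affCartan,
      wlevel, Fin.sum_univ_succ, -zero_sub] <;> ring

def rootLattice (p : ℕ) [NeZero p] : AddSubgroup (AffWt p) :=
  AddSubgroup.closure (Set.range affRoot)

open Fin.NatCast in
lemma mem_rootLattice_of_wcls_eq_zero {w : AffWt p} (hw₀ : wlevel w = 0) (hw : wcls w = 0) :
    w ∈ rootLattice p := by
  let π := QuotientAddGroup.mk' (rootLattice p)
  let e : Fin p → AffWt p := fun j => Pi.single j 1
  let d := π (e 1 - e 0)
  have step (j : Fin p) : π (e (j + 1) - e j) = π (e j - e (j - 1)) := by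
    rw [QuotientAddGroup.mk'_apply, QuotientAddGroup.mk'_apply, QuotientAddGroup.eq]
    have : -(e (j + 1) - e j) + (e j - e (j - 1)) = affRoot j := by
      rw [affRoot_eq]
      module
    exact this ▸ AddSubgroup.subset_closure ⟨j, rfl⟩
  have hd (t : ℕ) : π (e ((t : Fin p) + 1) - e t) = d := by
    induction t with
    | zero => rw [Nat.cast_zero, zero_add]
    | succ t ih => rw [Nat.cast_succ, step, add_sub_cancel_right, ih]
  have hsum (t : ℕ) : π (e t - e 0) = t • d := by
    induction t with
    | zero => rw [Nat.cast_zero, sub_self, map_zero, zero_smul]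
    | succ t ih =>
      rw [Nat.cast_succ, ← sub_add_sub_cancel _ (e t), map_add, hd, ih, succ_nsmul, add_comm]
  have hpd : p • d = 0 := by
    rw [← hsum p, Fin.natCast_self, sub_self, map_zero]
  have hw_eq : w = ∑ k, w k • (e k - e 0) := by
    funext j
    have : ∑ k, w k = 0 := hw₀
    simp [e, Finset.sum_apply, Pi.single_apply, mul_sub, sum_sub_distrib, this]
  obtain ⟨m, hm⟩ : (p : ℤ) ∣ ∑ k, (k.val : ℤ) * w k := by
    rw [← ZMod.intCast_zmod_eq_zero_iff_dvd, ← hw]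
    push_cast
    rfl
  rw [← QuotientAddGroup.eq_zero_iff, ← QuotientAddGroup.mk'_apply, hw_eq, map_sum]
  calc ∑ k, π (w k • (e k - e 0))
      = ∑ k, ((k.val : ℤ) * w k) • d := by
        refine sum_congr rfl fun k _ => ?_
        rw [map_zsmul, ← Fin.cast_val_eq_self k, hsum, Fin.cast_val_eq_self, mul_comm, mul_smul,
          natCast_zsmul]
    _ = m • (p • d) := by rw [← sum_smul, hm, mul_comm, mul_smul, natCast_zsmul]
    _ = 0 := by rw [hpd, smul_zero]

section Invariant

variable {β : Type*}

def IsWeylInvariant (f : AffWt p → β) : Prop := ∀ i n, f (affReflect i n) = f n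

variable {f : AffWt p → β}

lemma IsWeylInvariant.apply_foldr_affReflect (hf : IsWeylInvariant f) (l : List (Fin p))
    (n : AffWt p) : f (l.foldr affReflect n) = f n := by
  induction l with
  | nil => rfl
  | cons i l ih => rw [List.foldr_cons, hf, ih]

lemma IsWeylInvariant.apply_weylShift (hf : IsWeylInvariant f)
    (hp : p = 2 ∨ p = 3 ∨ p = 5 ∨ p = 7) (n : AffWt p) : f (weylShift n) = f n := by
  rw [← foldr_affReflect_eq_weylShift hp, hf.apply_foldr_affReflect]

lemma IsWeylInvariant.apply_weylShiftInv (hf : IsWeylInvariant f)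
    (hp : p = 2 ∨ p = 3 ∨ p = 5 ∨ p = 7) (n : AffWt p) : f (weylShiftInv n) = f n := by
  rw [← hf.apply_weylShift hp, weylShift_weylShiftInv]

def invariantTranslations (f : AffWt p → β) : AddSubgroup (AffWt p) where
  carrier := {w | wlevel w = 0 ∧ ∀ n, f (translate w n) = f n}
  zero_mem' := ⟨by simp [wlevel], fun n => by simp [translate]⟩
  add_mem' := fun {v w} ⟨hv₀, hv⟩ ⟨hw₀, hw⟩ =>
    ⟨by simp [hv₀, hw₀], fun n => by rw [translate_add hw₀, hv, hw]⟩
  neg_mem' := fun {w} ⟨hw₀, hw⟩ =>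
    ⟨by simp [hw₀], fun n => by rw [← hw, translate_neg_cancel hw₀]⟩

lemma affRoot_zero_mem_invariantTranslations (hf : IsWeylInvariant f)
    (hp : p = 2 ∨ p = 3 ∨ p = 5 ∨ p = 7) : affRoot 0 ∈ invariantTranslations f := by
  refine ⟨wlevel_affRoot 0, fun n => ?_⟩
  rw [translate_affRoot_zero (by omega), hf.apply_weylShiftInv hp, hf, hf.apply_weylShift hp, hf]

lemma simpleCurrent_one_mem_invariantTranslations (hf : IsWeylInvariant f)
    (hp : p = 2 ∨ p = 3 ∨ p = 5 ∨ p = 7) {w : AffWt p} (hw : w ∈ invariantTranslations f) :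
    simpleCurrent 1 w ∈ invariantTranslations f := by
  refine ⟨by simp [hw.1], fun n => ?_⟩
  rw [← weylShift_weylShiftInv n, ← weylShift_translate hw.1, hf.apply_weylShift hp,
    hf.apply_weylShift hp, hw.2]

open Fin.NatCast in
lemma rootLattice_le_invariantTranslations (hf : IsWeylInvariant f)
    (hp : p = 2 ∨ p = 3 ∨ p = 5 ∨ p = 7) : rootLattice p ≤ invariantTranslations f := by
  rw [rootLattice, AddSubgroup.closure_le]
  rintro _ ⟨j, rfl⟩
  have h (t : ℕ) : affRoot (t : Fin p) ∈ invariantTranslations f := by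
    induction t with
    | zero => exact Nat.cast_zero (R := Fin p) ▸ affRoot_zero_mem_invariantTranslations hf hp
    | succ t ih =>
      rw [Nat.cast_succ, ← simpleCurrent_affRoot]
      exact simpleCurrent_one_mem_invariantTranslations hf hp ih
  exact Fin.cast_val_eq_self j ▸ h j.val

open Fin.NatCast in
lemma IsWeylInvariant.apply_translate (hf : IsWeylInvariant f)
    (hp : p = 2 ∨ p = 3 ∨ p = 5 ∨ p = 7) (t : ℕ) {mu : AffWt p} (hmu₀ : wlevel mu = 0)
    (hmu : wcls mu = t) (lam : AffWt p) :
    f (translate mu lam) = f (simpleCurrent t lam) := by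
  induction t generalizing lam mu with
  | zero =>
    rw [Nat.cast_zero, simpleCurrent_zero]
    have hQ := mem_rootLattice_of_wcls_eq_zero hmu₀ (hmu.trans Nat.cast_zero)
    exact (rootLattice_le_invariantTranslations hf hp hQ).2 lam
  | succ t ih =>
    have hu : wlevel (Pi.single 0 1 - Pi.single 1 1 : AffWt p) = 0 := by simp
    have hmu' : wcls (simpleCurrent 1 mu + (Pi.single 0 1 - Pi.single 1 1)) = t := by
      rw [wcls_add, wcls_simpleCurrent, hmu, hmu₀, wcls_sub, wcls_single, wcls_single]
      simp
    rw [← hf.apply_weylShift hp, weylShift_translate hmu₀, weylShift, ← translate_add hu,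
      ih (by simp [hmu₀, hu]) hmu', simpleCurrent_simpleCurrent, Nat.cast_succ, add_comm]

end Invariant

end AffWt

theorem stringFunctions_translation_eq_simpleCurrent_general
    (p : ℕ) [NeZero p] (hp : p = 2 ∨ p = 3 ∨ p = 5 ∨ p = 7)
    (S : StringFunctions p)
    (Λ lam mu : AffWt p)
    (hlamlev : wlevel lam = p) (hmulev : wlevel mu = 0)
    (i : Fin p) (hmucls : wcls mu = (i.1 : ZMod p)) :
    S.c Λ (lam + p • mu) = S.c Λ (simpleCurrent i lam) := by
  have hf : AffWt.IsWeylInvariant (S.c Λ) := fun i n => S.weyl_invariant Λ n i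
  have hlam : lam + p • mu = AffWt.translate mu lam := by
    rw [AffWt.translate, hlamlev, natCast_zsmul]
  rw [hlam, hf.apply_translate hp i.val hmulev hmucls, Fin.cast_val_eq_self]

/-- if `μ` is a weight of level `0` with `μ̄ = Λ̄_i mod A_q`, then for
every dominant integral weight `Λ` of level `p` and every weight `λ` of level `p`,
`c^Λ_{λ+pμ} = c^Λ_{(pΛ_i).λ}`. -/
theorem stringFunctions_translation_eq_simpleCurrent
    (p : ℕ) [NeZero p] (hp : p = 2 ∨ p = 3 ∨ p = 5 ∨ p = 7)
    (S : StringFunctions p)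
    (Λ lam mu : AffWt p) (hΛdom : IsDominant Λ) (hΛlev : wlevel Λ = p)
    (hlamlev : wlevel lam = p) (hmulev : wlevel mu = 0)
    (i : Fin p) (hmucls : wcls mu = (i.1 : ZMod p)) :
    S.c Λ (lam + p • mu) = S.c Λ (simpleCurrent i lam) :=
  stringFunctions_translation_eq_simpleCurrent_general p hp S Λ lam mu hlamlev hmulev i hmucls
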